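/- Let r_1 ≠ r_2 be real numbers. (1) For Y = (r_1−r_2)E_1 + r_2E ∈ J^1, the stabilizer of Y in F_{4(-20)} equals (F_{4(-20)})_{E_1} = Spin(9). (2) For Y' = (r_1−r_2)E_3 + r_2E ∈ J^1, the stabilizer of Y' in F_{4(-20)} equals (F_{4(-20)})_{E_3} = Spin^0(8,1). -/

import Mathlib

noncomputable section
/-! ## The octonions, realized via the Cayley–Dickson construction on the quaternions -/

/-- The octonions `𝕆 = ℍ ⊕ ℍ`. -/
abbrev Oct : Type := Quaternion ℝ × Quaternion ℝ

/-- Octonion multiplication `(a,b)(c,d) = (ac - d̄b, da + bc̄)`. -/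
def omul (x y : Oct) : Oct :=
  (x.1 * y.1 - star y.2 * x.2, y.2 * x.1 + x.2 * star y.1)

/-- Octonion conjugation `x ↦ x̄`. -/
def oconj (x : Oct) : Oct := (star x.1, -x.2)

/-- The unit octonion `1`. -/
def oone : Oct := (1, 0)

/-- The real (scalar) part `Re(x)` of an octonion. -/
def oRe (x : Oct) : ℝ := x.1.re

/-- The standard inner product `(x|y)` on the octonions. -/
def oinner (x y : Oct) : ℝ := (x.1 * star y.1).re + (x.2 * star y.2).re

/-- The norm form `n(x) = (x|x)`. -/
def onorm (x : Oct) : ℝ := oinner x x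

/-- The imaginary (vector) part `Im(x)` of an octonion. -/
def oIm (x : Oct) : Oct := x - oRe x • oone

theorem oRe_add (x y : Oct) : oRe (x + y) = oRe x + oRe y := by
  simp [oRe]

theorem oRe_sub (x y : Oct) : oRe (x - y) = oRe x - oRe y := by
  simp [oRe]

theorem oRe_smul (c : ℝ) (x : Oct) : oRe (c • x) = c * oRe x := by
  simp [oRe]

theorem oRe_oone : oRe oone = 1 := by
  simp [oRe, oone, Quaternion.re_one]

/-- The space `Im 𝕆` of imaginary octonions. -/
def ImOct : Submodule ℝ Oct where
  carrier := {x | oRe x = 0}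
  add_mem' := by
    intro a b ha hb
    simp only [Set.mem_setOf_eq] at *
    rw [oRe_add, ha, hb, add_zero]
  zero_mem' := by
    show oRe 0 = 0
    simp [oRe, Quaternion.re_zero]
  smul_mem' := by
    intro c x hx
    simp only [Set.mem_setOf_eq] at *
    rw [oRe_smul, hx, mul_zero]

theorem oIm_mem (z : Oct) : oIm z ∈ ImOct := by
  show oRe (oIm z) = 0
  show oRe (z - oRe z • oone) = 0
  rw [oRe_sub, oRe_smul, oRe_oone, mul_one, sub_self]

theorem oinner_oone (x : Oct) : oinner x oone = oRe x := by
  simp [oinner, oone, oRe, Quaternion.re_zero]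
/-! ## Small helper lemmas on the automorphism group of a module -/

theorem le_mul_apply {M : Type*} [AddCommMonoid M] [Module ℝ M] (a b : M ≃ₗ[ℝ] M) (x : M) :
    (a * b) x = a (b x) := rfl

theorem le_one_apply {M : Type*} [AddCommMonoid M] [Module ℝ M] (x : M) :
    (1 : M ≃ₗ[ℝ] M) x = x := rfl

theorem le_apply_inv_apply {M : Type*} [AddCommMonoid M] [Module ℝ M] (a : M ≃ₗ[ℝ] M) (z : M) :
    a (a⁻¹ z) = z := by
  rw [← le_mul_apply, mul_inv_cancel, le_one_apply]

theorem le_inv_apply_apply {M : Type*} [AddCommMonoid M] [Module ℝ M] (a : M ≃ₗ[ℝ] M) (z : M) :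
    a⁻¹ (a z) = z := by
  rw [← le_mul_apply, inv_mul_cancel, le_one_apply]
/-! ## The exceptional Jordan algebra `J¹`

`J¹` is the real vector space `ℝ³ ⊕ 𝕆³`, whose element `((ξ₁,ξ₂,ξ₃),(x₁,x₂,x₃))`
represents the twisted-hermitian matrix `h¹(ξ₁,ξ₂,ξ₃; x₁,x₂,x₃)`, i.e.
`ξ₁E₁ + ξ₂E₂ + ξ₃E₃ + F¹₁(x₁) + F¹₂(x₂) + F¹₃(x₃)`. -/

abbrev J1 : Type := (ℝ × ℝ × ℝ) × (Oct × Oct × Oct)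

/-- `jmk a b c x y z = h¹(a,b,c;x,y,z)`. -/
def jmk (a b c : ℝ) (x y z : Oct) : J1 := ((a, b, c), (x, y, z))

def ja1 (X : J1) : ℝ := X.1.1
def ja2 (X : J1) : ℝ := X.1.2.1
def ja3 (X : J1) : ℝ := X.1.2.2
def jx1 (X : J1) : Oct := X.2.1
def jx2 (X : J1) : Oct := X.2.2.1
def jx3 (X : J1) : Oct := X.2.2.2

/-- The Jordan product `X ∘ Y = (XY + YX)/2` of `J¹`, written out in components
(obtained by multiplying the twisted-hermitian matrices `h¹(ξ;x)` and `h¹(η;y)`). -/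
def jmul (X Y : J1) : J1 :=
  jmk
    (ja1 X * ja1 Y - oinner (jx2 X) (jx2 Y) - oinner (jx3 X) (jx3 Y))
    (ja2 X * ja2 Y + oinner (jx1 X) (jx1 Y) - oinner (jx3 X) (jx3 Y))
    (ja3 X * ja3 Y + oinner (jx1 X) (jx1 Y) - oinner (jx2 X) (jx2 Y))
    ((2:ℝ)⁻¹ • ((ja2 X + ja3 X) • jx1 Y + (ja2 Y + ja3 Y) • jx1 X
      - (oconj (omul (jx2 Y) (jx3 X)) + oconj (omul (jx2 X) (jx3 Y)))))
    ((2:ℝ)⁻¹ • ((ja3 X + ja1 X) • jx2 Y + (ja3 Y + ja1 Y) • jx2 X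
      + (oconj (omul (jx3 Y) (jx1 X)) + oconj (omul (jx3 X) (jx1 Y)))))
    ((2:ℝ)⁻¹ • ((ja1 X + ja2 X) • jx3 Y + (ja1 Y + ja2 Y) • jx3 X
      + (oconj (omul (jx1 Y) (jx2 X)) + oconj (omul (jx1 X) (jx2 Y)))))

/-- The trace. -/
def jtr (X : J1) : ℝ := ja1 X + ja2 X + ja3 X

/-- The identity element `E`. -/
def jE : J1 := jmk 1 1 1 0 0 0

/-- The inner product `(X|Y) = tr(X ∘ Y)`. -/
def jinner (X Y : J1) : ℝ := jtr (jmul X Y)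

/-- Freudenthal's cross product
`X × Y = (2 X∘Y − tr(X)Y − tr(Y)X + (tr(X)tr(Y) − (X|Y))E)/2`. -/
def jcross (X Y : J1) : J1 :=
  (2:ℝ)⁻¹ • ((2:ℝ) • jmul X Y - jtr X • Y - jtr Y • X + (jtr X * jtr Y - jinner X Y) • jE)

/-- `X^{×2} = X × X`. -/
def jsq (X : J1) : J1 := jcross X X

/-- The determinant `det X = (X|X×X)/3`. -/
def jdet (X : J1) : ℝ := (3:ℝ)⁻¹ * jinner X (jcross X X)

/-- The characteristic polynomial `Φ_X(t) = det (tE − X)`. -/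
def charP (X : J1) (t : ℝ) : ℝ := jdet (t • jE - X)

/-- The quadratic form `Q(X) = −tr(X^{×2})`. -/
def Qform (X : J1) : ℝ := - jtr (jsq X)

/-- The diagonal matrix units. -/
def jE1 : J1 := jmk 1 0 0 0 0 0
def jE2 : J1 := jmk 0 1 0 0 0 0
def jE3 : J1 := jmk 0 0 1 0 0 0

/-- The off-diagonal elements `F¹ᵢ(x)`. -/
def jF1 (x : Oct) : J1 := jmk 0 0 0 x 0 0
def jF2 (x : Oct) : J1 := jmk 0 0 0 0 x 0
def jF3 (x : Oct) : J1 := jmk 0 0 0 0 0 x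

/-- `diag(a,b,c)`. -/
def jdiag (a b c : ℝ) : J1 := jmk a b c 0 0 0

/-- `P⁺ = h¹(1,−1,0;0,0,1)`. -/
def Pplus : J1 := jmk 1 (-1) 0 0 0 oone

/-- `P⁻ = h¹(−1,1,0;0,0,1)`. -/
def Pminus : J1 := jmk (-1) 1 0 0 0 oone

/-- `Q⁺(x) = h¹(0,0,0;x,x̄,0)`. -/
def Qplus (x : Oct) : J1 := jmk 0 0 0 x (oconj x) 0
/-! ## The exceptional Lie group `F₄₍₋₂₀₎` -/

/-- `F₄₍₋₂₀₎`, the automorphism group of the exceptional Jordan algebra `J¹`: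
`{g ∈ GL_ℝ(J¹) | g(X ∘ Y) = gX ∘ gY}`. -/
def F4 : Subgroup (J1 ≃ₗ[ℝ] J1) where
  carrier := {g | ∀ X Y : J1, g (jmul X Y) = jmul (g X) (g Y)}
  one_mem' := by
    intro X Y
    rfl
  mul_mem' := by
    intro a b ha hb
    have ha' : ∀ X Y : J1, a (jmul X Y) = jmul (a X) (a Y) := ha
    have hb' : ∀ X Y : J1, b (jmul X Y) = jmul (b X) (b Y) := hb
    intro X Y
    simp only [le_mul_apply]
    rw [hb', ha']
  inv_mem' := by
    intro a ha
    have ha' : ∀ X Y : J1, a (jmul X Y) = jmul (a X) (a Y) := ha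
    intro X Y
    apply a.injective
    rw [le_apply_inv_apply, ha', le_apply_inv_apply, le_apply_inv_apply]

/-- The (full) stabilizer subgroup of an element `v` inside `GL_ℝ(J¹)`;
`F4 ⊓ fixSubgroup v` is the stabilizer `(F₄₍₋₂₀₎)_v`, and intersections
`F4 ⊓ fixSubgroup v₁ ⊓ ⋯ ⊓ fixSubgroup vₙ` are pointwise stabilizers. -/
def fixSubgroup (v : J1) : Subgroup (J1 ≃ₗ[ℝ] J1) where
  carrier := {g | g v = v}
  one_mem' := by
    show (1 : J1 ≃ₗ[ℝ] J1) v = v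
    rfl
  mul_mem' := by
    intro a b ha hb
    have ha' : a v = v := ha
    have hb' : b v = v := hb
    show (a * b) v = v
    rw [le_mul_apply, hb', ha']
  inv_mem' := by
    intro a ha
    have ha' : a v = v := ha
    show a⁻¹ v = v
    conv_lhs => rw [← ha']
    rw [le_inv_apply_apply]

/-- The `F₄₍₋₂₀₎`-orbit of `v ∈ J¹`. -/
def orbF4 (v : J1) : Set J1 := {w | ∃ g ∈ F4, g v = w}

/-! An automorphism of a unital algebra fixes the unit, so on the line through `v` and `E`
it acts as on `v` itself; hence fixing `(r₁ - r₂) • v + r₂ • E` with `r₁ ≠ r₂` is the same as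
fixing `v`. -/

theorem Function.Surjective.map_unit_eq_of_map_mul {M : Type*} {mul : M → M → M} {e : M}
    (he_left : ∀ x, mul e x = x) (he_right : ∀ x, mul x e = x) {g : M → M}
    (hg : Function.Surjective g) (hmul : ∀ x y, g (mul x y) = mul (g x) (g y)) : g e = e := by
  obtain ⟨x, hx⟩ := hg e
  calc g e = mul (g e) (g x) := by rw [hx, he_right]
    _ = e := by rw [← hmul, he_left, hx]

theorem LinearMap.apply_smul_add_smul_eq_self_iff {K M : Type*} [Field K] [AddCommGroup M]
    [Module K M] {g : M →ₗ[K] M} {e : M} (he : g e = e) (v : M) {c : K} (hc : c ≠ 0) (d : K) :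
    g (c • v + d • e) = c • v + d • e ↔ g v = v := by
  rw [map_add, map_smul, map_smul, he, add_left_inj, smul_right_inj hc]

theorem oinner_zero_left (y : Oct) : oinner 0 y = 0 := by
  simp [oinner, Quaternion.re_zero]

theorem oinner_zero_right (y : Oct) : oinner y 0 = 0 := by
  simp [oinner, Quaternion.re_zero]

theorem omul_zero_left (y : Oct) : omul 0 y = 0 := by
  simp [omul]

theorem omul_zero_right (y : Oct) : omul y 0 = 0 := by
  simp [omul]

theorem oconj_zero : oconj 0 = 0 := by
  simp [oconj]

theorem jmul_jE_left (X : J1) : jmul jE X = X := by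
  obtain ⟨⟨a, b, c⟩, x, y, z⟩ := X
  simp only [jmul, jE, jmk, ja1, ja2, ja3, jx1, jx2, jx3, oinner_zero_left, omul_zero_left,
    omul_zero_right, oconj_zero, Prod.mk.injEq]
  norm_num
  refine ⟨?_, ?_, ?_⟩ <;> module

theorem jmul_jE_right (X : J1) : jmul X jE = X := by
  obtain ⟨⟨a, b, c⟩, x, y, z⟩ := X
  simp only [jmul, jE, jmk, ja1, ja2, ja3, jx1, jx2, jx3, oinner_zero_right, omul_zero_left,
    omul_zero_right, oconj_zero, Prod.mk.injEq]
  norm_num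
  refine ⟨?_, ?_, ?_⟩ <;> module

theorem F4_apply_jE {g : J1 ≃ₗ[ℝ] J1} (hg : g ∈ F4) : g jE = jE :=
  g.surjective.map_unit_eq_of_map_mul jmul_jE_left jmul_jE_right hg

theorem F4_inf_fixSubgroup_smul_add_smul_jE (v : J1) {c : ℝ} (hc : c ≠ 0) (d : ℝ) :
    F4 ⊓ fixSubgroup (c • v + d • jE) = F4 ⊓ fixSubgroup v := by
  ext g
  simp only [Subgroup.mem_inf]
  exact and_congr_right fun hg =>
    LinearMap.apply_smul_add_smul_eq_self_iff (g := g.toLinearMap) (F4_apply_jE hg) v hc d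

/-- **Proposition (spn-09).** For `r₁ ≠ r₂`:
(1) the stabilizer of `Y = (r₁−r₂)E₁ + r₂E` in `F₄₍₋₂₀₎` equals
`(F₄₍₋₂₀₎)_{E₁} = Spin(9)`;
(2) the stabilizer of `Y' = (r₁−r₂)E₃ + r₂E` equals `(F₄₍₋₂₀₎)_{E₃} = Spin⁰(8,1)`. -/
theorem stmt_7 (r1 r2 : ℝ) (h : r1 ≠ r2) :
    F4 ⊓ fixSubgroup ((r1 - r2) • jE1 + r2 • jE) = F4 ⊓ fixSubgroup jE1 ∧
    F4 ⊓ fixSubgroup ((r1 - r2) • jE3 + r2 • jE) = F4 ⊓ fixSubgroup jE3 :=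
  ⟨F4_inf_fixSubgroup_smul_add_smul_jE jE1 (sub_ne_zero.mpr h) r2,
    F4_inf_fixSubgroup_smul_add_smul_jE jE3 (sub_ne_zero.mpr h) r2⟩
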